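/- arXiv:1604.02740 — 2 statements merged into one kernel-verified Lean document; each statement's English description precedes it below -/
import Mathlib

section
/- For every real t and real x > 0, one has M_x(1/2 + it) · log x = (1/(2πi)) ∫_{(1)} x^z / ζ(1/2 + it + z) · dz/z², where the integral is over the vertical line Re z = 1. -/
/-!
The function `t ↦ log⁺ (1/t)` is `-log t` times the indicator of `(0, 1]`, so its Mellin transform
is minus the derivative of `1/s`, namely `1/s²` on `Re s > 0`. Mellin inversion on the line
`Re z = 1` then gives `(1/2πi) ∫_{(1)} y^z dz/z² = log⁺ y` for `y > 0`. For `Re s > 0` the series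
`1/ζ(s+z) = ∑ μ(n) n^{-s-z}` converges absolutely on `Re z = 1`, and the kernel has `L¹` norm `π y`,
so the integral may be taken term by term: `x^z n^{-z} = (x/n)^z` turns it into
`∑ μ(n) n^{-s} log⁺ (x/n)`, which is the finite sum `∑_{n ≤ x} μ(n) n^{-s} log (x/n)`.
-/

open Complex MeasureTheory Real

/-- `Msum x s = ∑_{n ≤ x} μ(n) n^{-s} log(x/n)`, which equals `M_x(s) · log x`. -/
noncomputable def Msum (x : ℝ) (s : ℂ) : ℂ :=
  ∑ n ∈ Finset.Icc 1 ⌊x⌋₊,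
    ((ArithmeticFunction.moebius n : ℤ) : ℂ) * (n : ℂ) ^ (-s) * (Real.log (x / n) : ℂ)

/-- The mollifier `M_x(s)`: `M_x(s) = (∑_{n ≤ x} μ(n) n^{-s} log(x/n)) / log x` for `x > 1`,
and `0` for `0 < x ≤ 1`. -/
noncomputable def M (x : ℝ) (s : ℂ) : ℂ :=
  if 1 < x then Msum x s / (Real.log x : ℂ) else 0

open Set Filter Topology

lemma one_add_mul_I_ne_zero (τ : ℝ) : 1 + τ * I ≠ 0 := fun h => by
  simpa using congrArg re h

lemma norm_one_add_mul_I_sq (τ : ℝ) : ‖(1 + τ * I) ^ 2‖ = 1 + τ ^ 2 := by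
  rw [norm_pow, ← ofReal_one, norm_add_mul_I, sq_sqrt (by positivity), one_pow]

lemma integrable_inv_one_add_mul_I_sq : Integrable fun τ : ℝ => 1 / (1 + τ * I) ^ 2 := by
  refine integrable_inv_one_add_sq.mono' ?_ (Eventually.of_forall fun τ => ?_)
  · exact (continuous_const.div (by fun_prop)
      fun τ => pow_ne_zero 2 (one_add_mul_I_ne_zero τ)).aestronglyMeasurable
  · rw [norm_div, norm_one, norm_one_add_mul_I_sq, one_div]

lemma posLog_inv_eq_neg_log_smul_indicator {t : ℝ} (ht : 0 < t) :
    ((log⁺ t⁻¹ : ℝ) : ℂ) = -(Real.log t • (Ioc 0 1).indicator (fun _ => (1 : ℂ)) t) := by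
  rcases le_or_gt t 1 with h | h
  · rw [indicator_of_mem (mem_Ioc.2 ⟨ht, h⟩), posLog_eq_log, Real.log_inv]
    · simp
    · rw [abs_of_pos (inv_pos.2 ht)]; exact one_le_inv_iff₀.2 ⟨ht, h⟩
  · rw [indicator_of_notMem (fun hm => h.not_ge hm.2), (posLog_eq_zero_iff _).2]
    · simp
    · rw [abs_of_pos (inv_pos.2 ht)]; exact (inv_lt_one_of_one_lt₀ h).le

theorem hasMellin_posLog_inv {s : ℂ} (hs : 0 < s.re) :
    HasMellin (fun t : ℝ => ((log⁺ t⁻¹ : ℝ) : ℂ)) s (1 / s ^ 2) := by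
  set g : ℝ → ℂ := (Ioc 0 1).indicator fun _ => 1
  have hg_loc : LocallyIntegrableOn g (Ioi 0) :=
    (locallyIntegrable_const (1 : ℂ)).indicator measurableSet_Ioc |>.locallyIntegrableOn _
  have hg_top : g =O[atTop] (· ^ (-(s.re + 1))) := by
    refine (Asymptotics.isBigO_zero _ _).congr' ?_ EventuallyEq.rfl
    filter_upwards [eventually_gt_atTop 1] with t ht
    exact (indicator_of_notMem (fun hm => ht.not_ge hm.2) _).symm
  have hg_bot : g =O[𝓝[>] 0] (· ^ (-(0 : ℝ))) := by
    refine Asymptotics.IsBigO.of_bound 1 (Eventually.of_forall fun t => ?_)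
    simp only [neg_zero, Real.rpow_zero, norm_one, one_mul, g]
    by_cases hm : t ∈ Ioc 0 1 <;> simp [hm]
  obtain ⟨hconv, hderiv⟩ :=
    mellin_hasDerivAt_of_isBigO_rpow hg_loc hg_top (lt_add_one _) hg_bot hs
  have hmellin_g : mellin g =ᶠ[𝓝 s] fun z => z⁻¹ := by
    filter_upwards [(continuous_re.isOpen_preimage _ isOpen_Ioi).mem_nhds hs] with z hz
    simpa using (hasMellin_one_Ioc hz).2
  have hlog : mellin (fun t => Real.log t • g t) s = -(s ^ 2)⁻¹ :=
    hderiv.unique ((hasDerivAt_inv (fun h => by simp [h] at hs)).congr_of_eventuallyEq hmellin_g)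
  have heq : EqOn (fun t : ℝ => ((log⁺ t⁻¹ : ℝ) : ℂ)) (fun t => (-1 : ℂ) • (Real.log t • g t))
      (Ioi 0) := fun t ht => by
    simpa using posLog_inv_eq_neg_log_smul_indicator ht
  refine ⟨IntegrableOn.congr_fun (hconv.const_smul (-1 : ℂ))
    (fun t ht => by simp only [heq ht]) measurableSet_Ioi, ?_⟩
  have : mellin (fun t : ℝ => ((log⁺ t⁻¹ : ℝ) : ℂ)) s =
      mellin (fun t => (-1 : ℂ) • (Real.log t • g t)) s :=
    setIntegral_congr_fun measurableSet_Ioi fun t ht => by simp only [heq ht]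
  rw [this, mellin_const_smul, hlog]
  simp

theorem integral_cpow_div_sq_eq_posLog {y : ℝ} (hy : 0 ≤ y) :
    ∫ τ : ℝ, (y : ℂ) ^ (1 + τ * I) / (1 + τ * I) ^ 2 * I = 2 * π * I * log⁺ y := by
  rcases hy.eq_or_lt with rfl | hy
  · simp [zero_cpow (one_add_mul_I_ne_zero _)]
  set f : ℝ → ℂ := fun t => ((log⁺ t⁻¹ : ℝ) : ℂ)
  have hmellin (τ : ℝ) : mellin f (1 + τ * I) = 1 / (1 + τ * I) ^ 2 :=
    (hasMellin_posLog_inv (by simp)).2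
  have hconv : MellinConvergent f 1 := by
    simpa using (hasMellin_posLog_inv (s := 1) (by simp)).1
  have hvert : VerticalIntegrable (mellin f) 1 := by
    simpa [VerticalIntegrable, hmellin] using integrable_inv_one_add_mul_I_sq
  have hcont : ContinuousAt f y⁻¹ :=
    (continuous_ofReal.comp continuous_posLog).continuousAt.comp
      (continuousAt_inv₀ (inv_ne_zero hy.ne'))
  have hinv := mellinInv_mellin_eq 1 f (inv_pos.2 hy) hconv hvert hcont
  have hintegrand (τ : ℝ) : ((y⁻¹ : ℝ) : ℂ) ^ (-((1 : ℝ) + τ * I)) • mellin f ((1 : ℝ) + τ * I) =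
      (y : ℂ) ^ (1 + τ * I) / (1 + τ * I) ^ 2 := by
    rw [ofReal_one, hmellin, ofReal_inv, inv_cpow_ofReal_nonneg hy.le, cpow_neg, inv_inv,
      smul_eq_mul, mul_one_div]
  simp only [mellinInv, hintegrand, inv_inv, f, real_smul] at hinv
  rw [integral_mul_const, ← hinv]
  generalize ∫ τ : ℝ, (y : ℂ) ^ (1 + τ * I) / (1 + τ * I) ^ 2 = J
  push_cast
  field_simp

lemma norm_cpow_div_sq (y τ : ℝ) (hy : 0 ≤ y) :
    ‖(y : ℂ) ^ (1 + τ * I) / (1 + τ * I) ^ 2 * I‖ = y * (1 + τ ^ 2)⁻¹ := by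
  rw [norm_mul, norm_I, mul_one, norm_div, norm_one_add_mul_I_sq,
    norm_cpow_eq_rpow_re_of_nonneg hy (by simp)]
  simp [div_eq_mul_inv]

lemma integrable_cpow_div_sq {y : ℝ} (hy : 0 ≤ y) :
    Integrable fun τ : ℝ => (y : ℂ) ^ (1 + τ * I) / (1 + τ * I) ^ 2 * I := by
  refine (integrable_inv_one_add_sq.const_mul y).mono' ?_
    (Eventually.of_forall fun τ => (norm_cpow_div_sq y τ hy).le)
  have hpow : Continuous fun τ : ℝ => (y : ℂ) ^ (1 + τ * I) :=
    (by fun_prop : Continuous fun τ : ℝ => 1 + τ * I).const_cpow (.inr one_add_mul_I_ne_zero)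
  exact ((hpow.div (by fun_prop) fun τ => pow_ne_zero 2 (one_add_mul_I_ne_zero τ)).mul
    continuous_const).aestronglyMeasurable

lemma integral_norm_cpow_div_sq {y : ℝ} (hy : 0 ≤ y) :
    ∫ τ : ℝ, ‖(y : ℂ) ^ (1 + τ * I) / (1 + τ * I) ^ 2 * I‖ = y * π := by
  simp_rw [norm_cpow_div_sq _ _ hy]
  rw [integral_const_mul, integral_univ_inv_one_add_sq]

lemma cpow_mul_LSeries_term {x : ℝ} (hx : 0 ≤ x) (a : ℕ → ℂ) {z : ℂ} (hz : z ≠ 0) (n : ℕ) :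
    (x : ℂ) ^ z * LSeries.term a z n = a n * ((x / n : ℝ) : ℂ) ^ z := by
  rcases eq_or_ne n 0 with rfl | hn
  · simp [zero_cpow hz]
  rw [LSeries.term_of_ne_zero hn, ofReal_div, div_cpow_ofReal_nonneg hx n.cast_nonneg,
    ofReal_natCast]
  ring

theorem integral_cpow_mul_LSeries_div_sq (a : ℕ → ℂ) (ha : LSeriesSummable a 1) {x : ℝ}
    (hx : 0 ≤ x) :
    ∫ τ : ℝ, (x : ℂ) ^ (1 + τ * I) * LSeries a (1 + τ * I) / (1 + τ * I) ^ 2 * I =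
      2 * π * I * ∑' n, a n * log⁺ (x / n) := by
  set F : ℕ → ℝ → ℂ := fun n τ => a n * (((x / n : ℝ) : ℂ) ^ (1 + τ * I) / (1 + τ * I) ^ 2 * I)
  have hF (τ : ℝ) :
      (x : ℂ) ^ (1 + τ * I) * LSeries a (1 + τ * I) / (1 + τ * I) ^ 2 * I = ∑' n, F n τ := by
    simp only [LSeries, ← tsum_mul_left, ← tsum_div_const, ← tsum_mul_right, F,
      cpow_mul_LSeries_term hx a (one_add_mul_I_ne_zero τ)]
    exact tsum_congr fun n => by ring
  have hF_int (n : ℕ) : Integrable (F n) :=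
    (integrable_cpow_div_sq (by positivity)).const_mul _
  have hF_norm : Summable fun n => ∫ τ, ‖F n τ‖ := by
    refine (ha.norm.mul_left (x * π)).congr fun n => ?_
    simp only [F, norm_mul (a n), integral_const_mul,
      integral_norm_cpow_div_sq (by positivity : 0 ≤ x / n), LSeries.norm_term_eq]
    rcases eq_or_ne n 0 with rfl | hn
    · simp
    · simp only [hn, if_false, one_re, Real.rpow_one]
      ring
  rw [integral_congr_ae (Eventually.of_forall hF),
    ← integral_tsum_of_summable_integral_norm hF_int hF_norm, ← tsum_mul_left]
  refine tsum_congr fun n => ?_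
  rw [integral_const_mul, integral_cpow_div_sq_eq_posLog (by positivity)]
  ring

theorem tsum_mul_posLog_div_eq_sum (a : ℕ → ℂ) {x : ℝ} (hx : 0 ≤ x) :
    ∑' n, a n * log⁺ (x / n) = ∑ n ∈ Finset.Icc 1 ⌊x⌋₊, a n * Real.log (x / n) := by
  rw [tsum_eq_sum (s := Finset.Icc 1 ⌊x⌋₊)]
  · refine Finset.sum_congr rfl fun n hn => ?_
    obtain ⟨hn1, hnx⟩ := Finset.mem_Icc.1 hn
    have hn0 : (0 : ℝ) < n := by exact_mod_cast hn1
    rw [posLog_eq_log]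
    rw [abs_of_nonneg (by positivity), one_le_div hn0]
    exact (Nat.le_floor_iff hx).1 hnx
  · intro n hn
    rcases eq_or_ne n 0 with rfl | hn0
    · simp
    have hxn : x < n := Nat.floor_lt hx |>.1 (by simp_all [Nat.one_le_iff_ne_zero])
    rw [(posLog_eq_zero_iff _).2 ?_, ofReal_zero, mul_zero]
    rw [abs_of_nonneg (by positivity)]
    exact div_le_one_of_le₀ hxn.le n.cast_nonneg

open ArithmeticFunction in
lemma LSeries_moebius_eq_inv_riemannZeta {w : ℂ} (hw : 1 < w.re) :
    LSeries (fun n => ((moebius n : ℤ) : ℂ)) w = (riemannZeta w)⁻¹ := by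
  rw [← LSeries_zeta_eq_riemannZeta hw]
  exact (eq_inv_of_mul_eq_one_right (LSeries_zeta_mul_Lseries_moebius hw))

lemma LSeries.term_mul_cpow_neg (f : ℕ → ℂ) (s z : ℂ) :
    LSeries.term (fun n => f n * (n : ℂ) ^ (-s)) z = LSeries.term f (s + z) := by
  ext n
  rcases eq_or_ne n 0 with rfl | hn
  · simp
  rw [LSeries.term_of_ne_zero hn, LSeries.term_of_ne_zero hn, cpow_neg,
    cpow_add _ _ (Nat.cast_ne_zero.2 hn)]
  field_simp

open ArithmeticFunction in
theorem integral_cpow_div_riemannZeta_div_sq {s : ℂ} (hs : 0 < s.re) {x : ℝ} (hx : 0 ≤ x) :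
    ∫ τ : ℝ, (x : ℂ) ^ (1 + τ * I) / riemannZeta (s + (1 + τ * I)) / (1 + τ * I) ^ 2 * I =
      2 * π * I * Msum x s := by
  set a : ℕ → ℂ := fun n => ((moebius n : ℤ) : ℂ) * (n : ℂ) ^ (-s)
  have ha : LSeriesSummable a 1 := by
    rw [LSeriesSummable, LSeries.term_mul_cpow_neg]
    exact LSeriesSummable_moebius_iff.2 (by simpa using hs)
  have hintegrand (τ : ℝ) :
      (x : ℂ) ^ (1 + τ * I) / riemannZeta (s + (1 + τ * I)) / (1 + τ * I) ^ 2 * I =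
        (x : ℂ) ^ (1 + τ * I) * LSeries a (1 + τ * I) / (1 + τ * I) ^ 2 * I := by
    rw [LSeries, LSeries.term_mul_cpow_neg, ← LSeries,
      LSeries_moebius_eq_inv_riemannZeta (by simpa using hs), div_eq_mul_inv _ (riemannZeta _)]
  rw [integral_congr_ae (.of_forall hintegrand), integral_cpow_mul_LSeries_div_sq a ha hx,
    tsum_mul_posLog_div_eq_sum a hx, Msum]

lemma M_mul_log_eq_Msum (x : ℝ) (s : ℂ) : M x s * Real.log x = Msum x s := by
  rw [M]
  split_ifs with hx
  · exact div_mul_cancel₀ _ (ofReal_ne_zero.2 (Real.log_pos hx).ne')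
  rw [zero_mul, eq_comm, Msum]
  refine Finset.sum_eq_zero fun n hn => ?_
  obtain ⟨hn1, hnx⟩ := Finset.mem_Icc.1 hn
  have hnx : (n : ℝ) ≤ x := (Nat.le_floor_iff' (by omega)).1 hnx
  have hn1 : (1 : ℝ) ≤ n := by exact_mod_cast hn1
  rw [show x / n = 1 by rw [div_eq_one_iff_eq (by positivity)]; linarith, Real.log_one,
    ofReal_zero, mul_zero]

/-- `M_x(1/2+it) log x = (1/(2πi)) ∫_{(1)} x^z ζ(1/2+it+z)^{-1} z^{-2} dz`, the contour
integral over `Re z = 1` being written via `z = 1 + iτ`, `dz = i dτ`. -/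
theorem M_eq_perron_integral (t : ℝ) (x : ℝ) (hx : 0 < x) :
    M x (1/2 + I * t) * (Real.log x : ℂ) =
      (1 / (2 * (π : ℂ) * I)) *
        ∫ τ : ℝ, ((x : ℂ) ^ (1 + τ * I) /
          riemannZeta (1/2 + I * t + (1 + τ * I)) / (1 + τ * I) ^ 2) * I := by
  rw [integral_cpow_div_riemannZeta_div_sq (by simp) hx.le, M_mul_log_eq_Msum]
  field_simp
end

section
/- For every real t and every complex w with Re w > 3/2, the Mellin transform ∫_1^∞ M_x(1/2 + it) (log x) x^{-w} dx converges and equals 1/((w−1)² ζ(w − 1/2 + it)). -/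
/-!
Every summand of `Msum x s · x^{-w}` has the form `μ(n) n^{-s} · K_n(x)`, where
`K_n(x) = 1_{x > n} log(x/n) x^{-w}` (the term `x = n` vanishes anyway). The kernel has the explicit
antiderivative `x^{1-w}((1-w) log(x/n) - 1)/(1-w)²`, so `∫_1^∞ K_n = n^{1-w}/(w-1)²`, and the
absolute integrals are `n^{1-Re w}/(Re w-1)²`. Against the coefficients `|μ(n) n^{-s}| ≤ n^{-1/2}`
these are summable exactly when `Re w > 3/2`, which justifies exchanging sum and integral. What
remains is the Dirichlet series `∑ μ(n) n^{-(w-1/2+it)} = 1/ζ(w-1/2+it)`.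
-/

open Complex MeasureTheory Real

open Set Filter Topology

lemma MeasureTheory.integrable_tsum_of_summable_integral_norm {α E ι : Type*}
    [MeasurableSpace α] {μ : Measure α} [NormedAddCommGroup E] [CompleteSpace E]
    [SecondCountableTopology E] [MeasurableSpace E] [BorelSpace E] [Countable ι]
    {F : ι → α → E} (hF_int : ∀ i, Integrable (F i) μ)
    (hF_sum : Summable fun i => ∫ a, ‖F i a‖ ∂μ) :
    Integrable (fun a => ∑' i, F i a) μ := by
  refine ⟨(AEMeasurable.tsum fun i => (hF_int i).aemeasurable).aestronglyMeasurable, ?_⟩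
  rw [hasFiniteIntegral_iff_enorm]
  calc ∫⁻ a, ‖∑' i, F i a‖ₑ ∂μ ≤ ∫⁻ a, ∑' i, ‖F i a‖ₑ ∂μ :=
        lintegral_mono fun _ => enorm_tsum_le_tsum_enorm
    _ = ∑' i, ∫⁻ a, ‖F i a‖ₑ ∂μ := lintegral_tsum fun i => (hF_int i).aemeasurable.enorm
    _ = ∑' i, ENNReal.ofReal (∫ a, ‖F i a‖ ∂μ) := by
        simp_rw [ofReal_integral_norm_eq_lintegral_enorm (hF_int _)]
    _ = ENNReal.ofReal (∑' i, ∫ a, ‖F i a‖ ∂μ) :=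
        (ENNReal.ofReal_tsum_of_nonneg (fun _ => integral_nonneg fun _ => norm_nonneg _)
          hF_sum).symm
    _ < ⊤ := ENNReal.ofReal_lt_top

section LogMellin

variable {a : ℝ} {w : ℂ}

lemma integrableOn_log_div_mul_rpow {r : ℝ} (ha : 0 < a) (hr : 1 < r) :
    IntegrableOn (fun x : ℝ => Real.log (x / a) * x ^ (-r)) (Ioi a) := by
  set ε := (r - 1) / 2 with hε_def
  have hε : 0 < ε := by positivity
  have hdom : IntegrableOn (fun x : ℝ => (a ^ ε)⁻¹ / ε * x ^ (ε - r)) (Ioi a) :=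
    (integrableOn_Ioi_rpow_of_lt (by linarith) ha).const_mul _
  refine hdom.mono' ((by fun_prop : Measurable _).aestronglyMeasurable) ?_
  filter_upwards [ae_restrict_mem measurableSet_Ioi] with x (hx : a < x)
  have hx0 : 0 < x := ha.trans hx
  have hlog : 0 ≤ Real.log (x / a) := Real.log_nonneg ((one_le_div ha).mpr hx.le)
  calc ‖Real.log (x / a) * x ^ (-r)‖ = Real.log (x / a) * x ^ (-r) := by
        rw [Real.norm_of_nonneg (mul_nonneg hlog (by positivity))]
    _ ≤ (x / a) ^ ε / ε * x ^ (-r) := by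
        gcongr; exact Real.log_le_rpow_div (by positivity) hε
    _ = (a ^ ε)⁻¹ / ε * x ^ (ε - r) := by
        rw [Real.div_rpow hx0.le ha.le, Real.rpow_sub hx0, Real.rpow_neg hx0.le]
        field_simp

lemma norm_log_div_mul_cpow {x : ℝ} (ha : 0 < a) (hx : a < x) :
    ‖(Real.log (x / a) : ℂ) * (x : ℂ) ^ (-w)‖ = Real.log (x / a) * x ^ (-w.re) := by
  rw [norm_mul, Complex.norm_real, Real.norm_of_nonneg
    (Real.log_nonneg ((one_le_div ha).mpr hx.le)),
    Complex.norm_cpow_eq_rpow_re_of_pos (ha.trans hx), neg_re]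

lemma integrableOn_log_div_mul_cpow (ha : 0 < a) (hw : 1 < w.re) :
    IntegrableOn (fun x : ℝ => (Real.log (x / a) : ℂ) * (x : ℂ) ^ (-w)) (Ioi a) := by
  refine (integrableOn_log_div_mul_rpow ha hw).mono'
    ((by fun_prop : Measurable _).aestronglyMeasurable) ?_
  filter_upwards [ae_restrict_mem measurableSet_Ioi] with x hx
  exact (norm_log_div_mul_cpow ha hx).le

lemma hasDerivAt_cpow_mul_log_div (ha : 0 < a) (hw : w ≠ 1) {x : ℝ} (hx : 0 < x) :
    HasDerivAt (fun y : ℝ => (y : ℂ) ^ (1 - w) * ((1 - w) * Real.log (y / a) - 1) / (1 - w) ^ 2)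
      ((Real.log (x / a) : ℂ) * (x : ℂ) ^ (-w)) x := by
  have hw' : (1 : ℂ) - w ≠ 0 := sub_ne_zero.mpr hw.symm
  have hpow : HasDerivAt (fun y : ℝ => (y : ℂ) ^ (1 - w)) ((1 - w) * (x : ℂ) ^ (-w)) x := by
    have := (hasDerivAt_ofReal_cpow_const' hx.ne' (r := -w) (by simpa using hw)).const_mul (1 - w)
    simpa only [neg_add_eq_sub, mul_div_cancel₀ _ hw'] using this
  have hlog : HasDerivAt (fun y : ℝ => (Real.log (y / a) : ℂ)) ((x : ℂ)⁻¹) x := by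
    have := ((Real.hasDerivAt_log (div_pos hx ha).ne').comp x
      ((hasDerivAt_id x).div_const a)).ofReal_comp
    refine this.congr_deriv ?_
    have ha' : (a : ℂ) ≠ 0 := by exact_mod_cast ha.ne'
    push_cast
    field_simp
  refine ((hpow.mul ((hlog.const_mul (1 - w)).sub_const 1)).div_const ((1 - w) ^ 2)).congr_deriv ?_
  have hx' : (x : ℂ) ≠ 0 := by exact_mod_cast hx.ne'
  have : (x : ℂ) ^ (1 - w) * (x : ℂ)⁻¹ = (x : ℂ) ^ (-w) := by
    rw [Complex.cpow_sub _ _ hx', Complex.cpow_one, Complex.cpow_neg]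
    field_simp
  rw [mul_left_comm, this]
  field_simp
  ring

lemma tendsto_ofReal_cpow_atTop {s : ℂ} (hs : s.re < 0) :
    Tendsto (fun y : ℝ => (y : ℂ) ^ s) atTop (𝓝 0) := by
  rw [tendsto_zero_iff_norm_tendsto_zero]
  refine (tendsto_congr' (norm_ofReal_cpow_eventually_eq_atTop s)).mpr ?_
  simpa using tendsto_rpow_neg_atTop (neg_pos.mpr hs)

lemma tendsto_ofReal_cpow_mul_log_atTop {s : ℂ} (hs : s.re < 0) :
    Tendsto (fun y : ℝ => (y : ℂ) ^ s * Real.log y) atTop (𝓝 0) := by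
  rw [tendsto_zero_iff_norm_tendsto_zero]
  have := (isLittleO_log_rpow_atTop (neg_pos.mpr hs)).tendsto_div_nhds_zero
  refine this.congr' ?_
  filter_upwards [eventually_ge_atTop 1] with y hy
  rw [norm_mul, Complex.norm_cpow_eq_rpow_re_of_pos (by linarith), Complex.norm_real,
    Real.norm_of_nonneg (Real.log_nonneg hy), Real.rpow_neg (by linarith), div_eq_mul_inv, inv_inv,
    mul_comm]

lemma tendsto_cpow_mul_log_div_atTop (ha : 0 < a) (hw : 1 < w.re) :
    Tendsto (fun y : ℝ => (y : ℂ) ^ (1 - w) * ((1 - w) * Real.log (y / a) - 1) / (1 - w) ^ 2)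
      atTop (𝓝 0) := by
  have hs : (1 - w).re < 0 := by simpa using hw
  have := (((tendsto_ofReal_cpow_mul_log_atTop hs).const_mul (1 - w)).sub
    ((tendsto_ofReal_cpow_atTop hs).mul_const ((1 - w) * Real.log a + 1))).div_const ((1 - w) ^ 2)
  simp only [mul_zero, zero_mul, sub_zero, zero_div] at this
  refine this.congr' ?_
  filter_upwards [eventually_gt_atTop 0] with y hy
  rw [Real.log_div hy.ne' ha.ne']
  push_cast
  ring

lemma integral_log_div_mul_cpow (ha : 0 < a) (hw : 1 < w.re) :
    ∫ x in Ioi a, (Real.log (x / a) : ℂ) * (x : ℂ) ^ (-w) = (a : ℂ) ^ (1 - w) / (w - 1) ^ 2 := by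
  have hw1 : w ≠ 1 := by rintro rfl; simp at hw
  rw [integral_Ioi_of_hasDerivAt_of_tendsto'
    (fun x hx => hasDerivAt_cpow_mul_log_div ha hw1 (ha.trans_le hx))
    (integrableOn_log_div_mul_cpow ha hw) (tendsto_cpow_mul_log_div_atTop ha hw)]
  rw [div_self ha.ne', Real.log_one]
  push_cast
  ring

lemma integral_log_div_mul_rpow {r : ℝ} (ha : 0 < a) (hr : 1 < r) :
    ∫ x in Ioi a, Real.log (x / a) * x ^ (-r) = a ^ (1 - r) / (r - 1) ^ 2 := by
  apply Complex.ofReal_injective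
  have := integral_log_div_mul_cpow (w := r) ha (by simpa using hr)
  rw [← integral_complex_ofReal]
  push_cast
  rw [Complex.ofReal_cpow ha.le, Complex.ofReal_sub, Complex.ofReal_one, ← this]
  refine setIntegral_congr_fun measurableSet_Ioi fun x hx => ?_
  rw [Complex.ofReal_cpow (ha.trans hx).le, Complex.ofReal_neg]

end LogMellin

noncomputable def logRieszSum (c : ℕ → ℂ) (x : ℝ) : ℂ :=
  ∑ n ∈ Finset.Icc 1 ⌊x⌋₊, c n * (Real.log (x / n) : ℂ)

noncomputable def logKernel (a : ℝ) (w : ℂ) : ℝ → ℂ :=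
  (Ioi a).indicator fun x => (Real.log (x / a) : ℂ) * (x : ℂ) ^ (-w)

section LogKernel

variable {a x : ℝ} {w : ℂ}

lemma logKernel_eq_zero_of_le (h : x ≤ a) : logKernel a w x = 0 :=
  indicator_of_notMem (not_lt.mpr h) _

lemma logKernel_eq_of_le (ha : 0 < a) (h : a ≤ x) :
    logKernel a w x = (Real.log (x / a) : ℂ) * (x : ℂ) ^ (-w) := by
  rcases h.lt_or_eq with h | rfl
  · exact indicator_of_mem h _
  · simp [logKernel_eq_zero_of_le le_rfl, div_self ha.ne']

-- Holds by the junk values `x / 0 = 0` and `log 0 = 0`; it makes the `n = 0` terms below vanish.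
lemma logKernel_zero : logKernel 0 w = 0 := by
  funext x
  simp [logKernel]

lemma norm_logKernel (ha : 0 < a) :
    ‖logKernel a w x‖ = (Ioi a).indicator (fun x => Real.log (x / a) * x ^ (-w.re)) x := by
  by_cases hx : x ∈ Ioi a
  · rw [logKernel, indicator_of_mem hx, indicator_of_mem hx, norm_log_div_mul_cpow ha hx]
  · rw [logKernel, indicator_of_notMem hx, indicator_of_notMem hx, norm_zero]

lemma integrable_logKernel (ha : 0 < a) (hw : 1 < w.re) : Integrable (logKernel a w) :=
  (integrable_indicator_iff measurableSet_Ioi).mpr (integrableOn_log_div_mul_cpow ha hw)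

lemma setIntegral_Ioi_one_logKernel (ha : 1 ≤ a) (hw : 1 < w.re) :
    ∫ x in Ioi 1, logKernel a w x = (a : ℂ) ^ (1 - w) / (w - 1) ^ 2 := by
  rw [logKernel, setIntegral_indicator measurableSet_Ioi,
    inter_eq_right.mpr (Ioi_subset_Ioi ha), integral_log_div_mul_cpow (by linarith) hw]

lemma setIntegral_Ioi_one_norm_logKernel (ha : 1 ≤ a) (hw : 1 < w.re) :
    ∫ x in Ioi 1, ‖logKernel a w x‖ = a ^ (1 - w.re) / (w.re - 1) ^ 2 := by
  simp_rw [norm_logKernel (w := w) (by linarith : 0 < a)]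
  rw [setIntegral_indicator measurableSet_Ioi,
    inter_eq_right.mpr (Ioi_subset_Ioi ha), integral_log_div_mul_rpow (by linarith) hw]

end LogKernel

section LogRieszSum

variable (c : ℕ → ℂ) {w : ℂ}

lemma logRieszSum_mul_cpow_eq_tsum (x : ℝ) :
    logRieszSum c x * (x : ℂ) ^ (-w) = ∑' n : ℕ, c n * logKernel n w x := by
  rw [tsum_eq_sum (s := Finset.Icc 1 ⌊x⌋₊), logRieszSum, Finset.sum_mul]
  · refine Finset.sum_congr rfl fun n hn => ?_
    obtain ⟨hn1, hnx⟩ := Finset.mem_Icc.mp hn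
    rw [logKernel_eq_of_le (Nat.cast_pos.mpr hn1) ((Nat.le_floor_iff' (by omega)).mp hnx),
      mul_assoc]
  · intro n hn
    rcases Nat.eq_zero_or_pos n with rfl | hpos
    · simp [logKernel_zero]
    · have : ⌊x⌋₊ < n := by grind
      rw [logKernel_eq_zero_of_le (Nat.lt_of_floor_lt this).le, mul_zero]

variable (hw : 1 < w.re)
include hw

lemma integrableOn_mul_logKernel (n : ℕ) :
    IntegrableOn (fun x => c n * logKernel n w x) (Ioi 1) := by
  rcases Nat.eq_zero_or_pos n with rfl | hn
  · simp [logKernel_zero]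
  · exact ((integrable_logKernel (by exact_mod_cast hn) hw).const_mul (c n)).integrableOn

lemma setIntegral_Ioi_one_mul_logKernel (n : ℕ) :
    ∫ x in Ioi 1, c n * logKernel n w x = c n * (n : ℂ) ^ (1 - w) / (w - 1) ^ 2 := by
  rcases Nat.eq_zero_or_pos n with rfl | hn
  · have : (1 : ℂ) - w ≠ 0 := sub_ne_zero.mpr (by rintro rfl; simp at hw)
    simp [logKernel_zero, Complex.zero_cpow this]
  · rw [integral_const_mul, setIntegral_Ioi_one_logKernel (by exact_mod_cast hn) hw,
      Complex.ofReal_natCast, mul_div_assoc]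

lemma setIntegral_Ioi_one_norm_mul_logKernel (n : ℕ) :
    ∫ x in Ioi 1, ‖c n * logKernel n w x‖ = ‖c n * (n : ℂ) ^ (1 - w)‖ / (w.re - 1) ^ 2 := by
  rcases Nat.eq_zero_or_pos n with rfl | hn
  · have : (1 : ℂ) - w ≠ 0 := sub_ne_zero.mpr (by rintro rfl; simp at hw)
    simp [logKernel_zero, Complex.zero_cpow this]
  · simp_rw [norm_mul, integral_const_mul]
    rw [setIntegral_Ioi_one_norm_logKernel (by exact_mod_cast hn) hw, norm_natCast_cpow_of_pos hn]
    simp [mul_div_assoc]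

variable {c} (hc : Summable fun n : ℕ => c n * (n : ℂ) ^ (1 - w))
include hc

lemma summable_setIntegral_Ioi_one_norm_mul_logKernel :
    Summable fun n : ℕ => ∫ x in Ioi 1, ‖c n * logKernel n w x‖ := by
  simp_rw [setIntegral_Ioi_one_norm_mul_logKernel c hw]
  exact hc.norm.div_const _

theorem integrableOn_logRieszSum_mul_cpow :
    IntegrableOn (fun x : ℝ => logRieszSum c x * (x : ℂ) ^ (-w)) (Ioi 1) := by
  simp_rw [logRieszSum_mul_cpow_eq_tsum]
  exact integrable_tsum_of_summable_integral_norm (integrableOn_mul_logKernel c hw)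
    (summable_setIntegral_Ioi_one_norm_mul_logKernel hw hc)

theorem setIntegral_logRieszSum_mul_cpow :
    ∫ x in Ioi 1, logRieszSum c x * (x : ℂ) ^ (-w)
      = (∑' n : ℕ, c n * (n : ℂ) ^ (1 - w)) / (w - 1) ^ 2 := by
  simp_rw [logRieszSum_mul_cpow_eq_tsum, ← integral_tsum_of_summable_integral_norm
    (integrableOn_mul_logKernel c hw) (summable_setIntegral_Ioi_one_norm_mul_logKernel hw hc),
    setIntegral_Ioi_one_mul_logKernel c hw, tsum_div_const]

end LogRieszSum

open scoped LSeries.notation ArithmeticFunction.Moebius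

lemma mul_cpow_neg_mul_cpow_eq_term {f : ℕ → ℂ} (hf : f 0 = 0) (s w : ℂ) (n : ℕ) :
    f n * (n : ℂ) ^ (-s) * (n : ℂ) ^ (1 - w) = LSeries.term f (s + w - 1) n := by
  rcases eq_or_ne n 0 with rfl | hn
  · simp [hf]
  · rw [LSeries.term_of_ne_zero hn, mul_assoc, ← Complex.cpow_add _ _ (Nat.cast_ne_zero.mpr hn),
      show -s + (1 - w) = -(s + w - 1) by ring, Complex.cpow_neg, div_eq_mul_inv]

lemma LSeries_moebius_eq_inv_riemannZeta_s2 {s : ℂ} (hs : 1 < s.re) :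
    L ↗μ s = (riemannZeta s)⁻¹ :=
  (eq_inv_of_mul_eq_one_right
    (ArithmeticFunction.LSeries_zeta_eq_riemannZeta hs ▸
      ArithmeticFunction.LSeries_zeta_mul_Lseries_moebius hs))

/-- For `Re w > 3/2`, the Mellin transform `∫_1^∞ M_x(1/2+it) (log x) x^{-w} dx`
converges and equals `1/((w-1)² ζ(w - 1/2 + it))`. -/
theorem mellin_M_eq (t : ℝ) (w : ℂ) (hw : 3/2 < w.re) :
    IntegrableOn (fun x : ℝ => Msum x (1/2 + I * t) * (x : ℂ) ^ (-w)) (Set.Ioi 1) ∧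
    ∫ x in Set.Ioi (1 : ℝ), Msum x (1/2 + I * t) * (x : ℂ) ^ (-w)
      = 1 / ((w - 1) ^ 2 * riemannZeta (w - 1/2 + I * t)) := by
  set s : ℂ := 1/2 + I * t
  have hz : 1 < (s + w - 1).re := by simpa [s] using (by linarith : (1 : ℝ) < 2⁻¹ + w.re - 1)
  have hw1 : 1 < w.re := by linarith
  have hterm : (fun n : ℕ => ↗μ n * (n : ℂ) ^ (-s) * (n : ℂ) ^ (1 - w))
      = LSeries.term ↗μ (s + w - 1) :=
    funext (mul_cpow_neg_mul_cpow_eq_term (by simp) s w)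
  have hc : Summable fun n : ℕ => ↗μ n * (n : ℂ) ^ (-s) * (n : ℂ) ^ (1 - w) :=
    hterm ▸ ArithmeticFunction.LSeriesSummable_moebius_iff.mpr hz
  refine ⟨integrableOn_logRieszSum_mul_cpow hw1 hc,
    (setIntegral_logRieszSum_mul_cpow hw1 hc).trans ?_⟩
  rw [hterm, ← LSeries, LSeries_moebius_eq_inv_riemannZeta_s2 hz,
    show s + w - 1 = w - 1/2 + I * t by ring]
  field_simp
end
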